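/- If f, g : G → G' are homotopic digraph maps, then they induce the same homomorphisms on path homology: f_* = g_* : H_n(G) → H_n(G') for all n. Consequently, if digraphs G and H are homotopy equivalent, then H_n(G) ≅ H_n(H) for all n; moreover, if the homotopy equivalence is realized by digraph maps f : G → H and g : H → G, then the induced maps f_* and g_* are mutually inverse isomorphisms of the path homology groups of G and H. -/

import Mathlib

/-!
STATEMENT 7: Homotopic digraph maps f, g : G → G' induce the same homomorphisms on path
homology (f_* = g_* : H_n(G) → H_n(G') for all n).  Consequently, homotopy equivalent
digraphs have isomorphic path homology in all degrees, and if the homotopy equivalence is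
realized by digraph maps f : G → H and g : H → G then f_* and g_* are mutually inverse
isomorphisms.

"f_* = g_* on H_n" is expressed at the level of cycles: for every n-cycle z of Ω_*(G),
the images f_* z and g_* z are n-cycles of Ω_*(G') whose difference is an n-boundary
(an element of ∂Ω_{n+1}(G')); "mutually inverse" is expressed by g_*(f_* z) − z being a
boundary for all cycles z of G (and symmetrically), together with H_n(G) ≅ H_n(H).
-/

open scoped Classical

namespace PH

/-- An elementary path (a list of vertices) is regular if no two consecutive
vertices coincide. -/
def Reg {V : Type} (l : List V) : Prop := l.Chain' (· ≠ ·)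

/-- The regular boundary operator ∂ on the span of regular paths (all degrees at once,
with the convention that ∂ vanishes on 0-paths): on a basis path `p` of length ≥ 2 it is
the alternating sum of the vertex deletions, with non-regular terms replaced by 0. -/
noncomputable def dReg (K : Type) [Field K] (V : Type) :
    (List V →₀ K) →ₗ[K] (List V →₀ K) :=
  Finsupp.lsum K fun p => LinearMap.toSpanSingleton K (List V →₀ K)
    (if 2 ≤ p.length then
      ∑ q : Fin p.length, ((-1 : K) ^ (q : ℕ)) •
        (if Reg (p.eraseIdx (q : ℕ)) then Finsupp.single (p.eraseIdx (q : ℕ)) (1 : K) else 0)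
    else 0)

/-- The map induced on regular chains by a vertex map f:
`e_{i₀…iₙ} ↦ e_{f(i₀)…f(iₙ)}` if the image path is regular, and 0 otherwise. -/
noncomputable def find (K : Type) [Field K] {V W : Type} (f : V → W) :
    (List V →₀ K) →ₗ[K] (List W →₀ K) :=
  Finsupp.lsum K fun p => LinearMap.toSpanSingleton K (List W →₀ K)
    (if Reg (p.map f) then Finsupp.single (p.map f) (1 : K) else 0)

/-- `A_n(P)`: the span of the regular allowed n-paths (lists of n+1 vertices in P). -/
def Asub (K : Type) [Field K] {V : Type} (P : Set (List V)) (n : ℕ) :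
    Submodule K (List V →₀ K) :=
  Finsupp.supported K K {l | l ∈ P ∧ l.length = n + 1 ∧ Reg l}

/-- `Ω_n(P)`: the ∂-invariant allowed regular n-chains. -/
noncomputable def OmegaSub (K : Type) [Field K] {V : Type} (P : Set (List V)) (n : ℕ) :
    Submodule K (List V →₀ K) :=
  Asub K P n ⊓ Submodule.comap (dReg K V) (Asub K P (n - 1))

/-- The n-cycles of Ω_*(P). -/
noncomputable def Zsub (K : Type) [Field K] {V : Type} (P : Set (List V)) (n : ℕ) :
    Submodule K (List V →₀ K) :=
  OmegaSub K P n ⊓ LinearMap.ker (dReg K V)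

/-- The n-boundaries ∂Ω_{n+1}(P). -/
noncomputable def Bsub (K : Type) [Field K] {V : Type} (P : Set (List V)) (n : ℕ) :
    Submodule K (List V →₀ K) :=
  Submodule.map (dReg K V) (OmegaSub K P (n + 1))

/-- Path homology `H_n(P)`, realized as the image of the n-cycles in the quotient of the
ambient space by the n-boundaries (so `H_n(P) ≅ Z_n/(Z_n ∩ B_n) = Z_n/B_n`). -/
noncomputable def Hsm (K : Type) [Field K] {V : Type} (P : Set (List V)) (n : ℕ) :
    Submodule K ((List V →₀ K) ⧸ Bsub K P n) :=
  Submodule.map (Bsub K P n).mkQ (Zsub K P n)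

/-- A path complex on V: a set of non-empty elementary paths (lists) closed under
removing the last (`dropLast`) or the first (`tail`) vertex. -/
structure PathComplex (V : Type) where
  carrier : Set (List V)
  not_nil : ∀ p ∈ carrier, p ≠ []
  dropLast_mem : ∀ p ∈ carrier, 2 ≤ p.length → p.dropLast ∈ carrier
  tail_mem : ∀ p ∈ carrier, 2 ≤ p.length → p.tail ∈ carrier

end PH

namespace PH

structure Digraph' (V : Type) where
  edge : V → V → Prop
  loopless : ∀ v : V, ¬ edge v v

def pathsOf {V : Type} (G : Digraph' V) : Set (List V) :=
  {l | l ≠ [] ∧ l.Chain' G.edge}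

def IsDigraphMap {V W : Type} (G : Digraph' V) (H : Digraph' W) (f : V → W) : Prop :=
  ∀ i j : V, G.edge i j → f i = f j ∨ H.edge (f i) (f j)

/-- One-step homotopy of maps into a digraph H: f(x) ⇒ g(x) for all x, or
g(x) ⇒ f(x) for all x (where a ⇒ b means a = b or a → b). -/
def StepHomotopic {V W : Type} (H : Digraph' W) (f g : V → W) : Prop :=
  (∀ x : V, f x = g x ∨ H.edge (f x) (g x)) ∨
  (∀ x : V, g x = f x ∨ H.edge (g x) (f x))

/-- f ≃ g : a finite chain of one-step homotopies through digraph maps G → H. -/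
def DHomotopic {V W : Type} (G : Digraph' V) (H : Digraph' W) (f g : V → W) : Prop :=
  Relation.ReflTransGen
    (fun a b => IsDigraphMap G H a ∧ IsDigraphMap G H b ∧ StepHomotopic H a b) f g

end PH

/-!
A one-step homotopy `f ⇒ g` is the same thing as a digraph map `φ` from the cylinder `G □ I`
(two copies of `G`, with an edge from each bottom vertex to its top copy) to `H`, restricting to
`f` on the bottom and to `g` on the top. The prism operator
`P e_{i₀…iₙ} = ∑ₖ (-1)ᵏ e_{(i₀,0)…(iₖ,0)(iₖ,1)…(iₙ,1)}` maps allowed paths of `G` to allowed paths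
of `G □ I` and satisfies `∂P + P∂ = ι₁ - ι₀`, so for a cycle `z` of `G` the chain `φ_*(P z)`
lies in `Ω_{n+1}(H)` and has boundary `g_* z - f_* z`. Chaining one-step homotopies shows that
homotopic maps agree on homology, and a homotopy equivalence then induces mutually inverse maps.
-/

section QuotientEquiv

variable {R M N : Type*} [Ring R] [AddCommGroup M] [Module R M] [AddCommGroup N] [Module R N]

noncomputable def Submodule.mapMkQEquivOfInverse {Z B : Submodule R M} {Z' B' : Submodule R N}
    (F : M →ₗ[R] N) (G : N →ₗ[R] M) (hFB : B ≤ B'.comap F) (hGB : B' ≤ B.comap G)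
    (hFZ : Z ≤ Z'.comap F) (hGZ : Z' ≤ Z.comap G)
    (hGF : ∀ z ∈ Z, G (F z) - z ∈ B) (hFG : ∀ z ∈ Z', F (G z) - z ∈ B') :
    Z.map B.mkQ ≃ₗ[R] Z'.map B'.mkQ :=
  have hF : ∀ x ∈ Z.map B.mkQ, B.mapQ B' F hFB x ∈ Z'.map B'.mkQ := by
    rintro _ ⟨z, hz, rfl⟩
    exact ⟨F z, hFZ hz, rfl⟩
  have hG : ∀ x ∈ Z'.map B'.mkQ, B'.mapQ B G hGB x ∈ Z.map B.mkQ := by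
    rintro _ ⟨z, hz, rfl⟩
    exact ⟨G z, hGZ hz, rfl⟩
  LinearEquiv.ofLinearMap ((B.mapQ B' F hFB).restrict hF) ((B'.mapQ B G hGB).restrict hG)
    (by
      ext ⟨_, z, hz, rfl⟩
      exact (Submodule.Quotient.eq B').mpr (hFG z hz))
    (by
      ext ⟨_, z, hz, rfl⟩
      exact (Submodule.Quotient.eq B).mpr (hGF z hz))

end QuotientEquiv

lemma Finsupp.supported_le_comap {R α N : Type*} [Semiring R] [AddCommMonoid N] [Module R N]
    {S : Set α} {M : Submodule R N} {T : (α →₀ R) →ₗ[R] N}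
    (h : ∀ a ∈ S, T (single a 1) ∈ M) : supported R R S ≤ M.comap T := by
  rw [supported_eq_span_single, Submodule.span_le]
  rintro _ ⟨a, ha, rfl⟩
  exact h a ha

namespace PH

open Finsupp

variable {K : Type} [Field K] {V W X : Type}

lemma reg_iff {l : List V} :
    Reg l ↔ ∀ (i : ℕ) (h : i + 1 < l.length), l[i] ≠ l[i + 1] :=
  List.isChain_iff_getElem

lemma reg_of_reg_map {f : V → W} {l : List V} (h : Reg (l.map f)) : Reg l :=
  (List.isChain_map f).mp h |>.imp fun _ _ hab e => hab (congrArg f e)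

noncomputable def regSingle (K : Type) [Field K] {V : Type} (l : List V) : List V →₀ K :=
  if Reg l then single l 1 else 0

/-- `∂ e_p`, with the deletions indexed by `range` rather than `Fin`. -/
noncomputable def pathBoundary (K : Type) [Field K] {V : Type} (p : List V) : List V →₀ K :=
  if 2 ≤ p.length then ∑ q ∈ Finset.range p.length, (-1 : K) ^ q • regSingle K (p.eraseIdx q)
  else 0

lemma dReg_single (p : List V) (c : K) : dReg K V (single p c) = c • pathBoundary K p := by
  simp only [dReg, lsum_single, LinearMap.toSpanSingleton_apply, pathBoundary, regSingle,
    Fin.sum_univ_eq_sum_range (fun q => (-1 : K) ^ q •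
      (if Reg (p.eraseIdx q) then single (p.eraseIdx q) (1 : K) else 0))]

lemma find_single (f : V → W) (p : List V) (c : K) :
    find K f (single p c) = c • regSingle K (p.map f) := by
  simp only [find, lsum_single, LinearMap.toSpanSingleton_apply, regSingle]

lemma find_regSingle (f : V → W) (l : List V) :
    find K f (regSingle K l) = regSingle K (l.map f) := by
  by_cases h : Reg l
  · rw [regSingle, if_pos h, find_single, one_smul]
  · rw [regSingle, if_neg h, map_zero, regSingle, if_neg (mt reg_of_reg_map h)]

lemma eraseIdx_eq_eraseIdx_succ_of_getElem_eq {l : List V} {i : ℕ} (hi : i + 1 < l.length)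
    (h : l[i] = l[i + 1]) : l.eraseIdx i = l.eraseIdx (i + 1) :=
  List.ext_getElem (by grind) (by grind)

lemma not_reg_eraseIdx_of_getElem_eq {l : List V} {i q : ℕ} (hi : i + 1 < l.length)
    (h : l[i] = l[i + 1]) (hqi : q ≠ i) (hqi' : q ≠ i + 1) : ¬ Reg (l.eraseIdx q) := by
  rw [reg_iff]
  push Not
  rcases lt_or_gt_of_ne hqi with hq | hq
  · exact ⟨i - 1, by grind, by grind⟩
  · exact ⟨i, by grind, by grind⟩

/-- The deletions of the two equal neighbours of a non-regular path cancel, and all other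
deletions are non-regular. -/
lemma pathBoundary_eq_zero_of_not_reg {p : List V} (hp : ¬ Reg p) :
    pathBoundary K p = 0 := by
  obtain ⟨i, hi, heq⟩ : ∃ (i : ℕ) (h : i + 1 < p.length), p[i] = p[i + 1] := by
    simpa [reg_iff] using hp
  rw [pathBoundary, if_pos (by omega), Finset.sum_eq_add i (i + 1) (by omega)]
  · rw [eraseIdx_eq_eraseIdx_succ_of_getElem_eq hi heq, pow_succ, mul_neg_one, neg_smul,
      add_neg_cancel]
  · intro q _ ⟨hqi, hqi'⟩
    rw [regSingle, if_neg (not_reg_eraseIdx_of_getElem_eq hi heq hqi hqi'), smul_zero]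
  · intro h; simp at h; omega
  · intro h; simp at h; omega

lemma dReg_regSingle (l : List V) : dReg K V (regSingle K l) = pathBoundary K l := by
  by_cases h : Reg l
  · rw [regSingle, if_pos h, dReg_single, one_smul]
  · rw [regSingle, if_neg h, map_zero, pathBoundary_eq_zero_of_not_reg h]

lemma find_pathBoundary (f : V → W) (p : List V) :
    find K f (pathBoundary K p) = pathBoundary K (p.map f) := by
  simp only [pathBoundary, List.length_map]
  split_ifs
  · simp only [map_sum, map_smul, find_regSingle, List.eraseIdx_map]
  · exact map_zero _

lemma dReg_comp_find (f : V → W) : (dReg K W).comp (find K f) = (find K f).comp (dReg K V) := by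
  ext p : 2
  simp only [LinearMap.comp_apply, lsingle_apply, find_single, dReg_single, one_smul,
    dReg_regSingle, find_pathBoundary]

lemma dReg_find (f : V → W) (z : List V →₀ K) :
    dReg K W (find K f z) = find K f (dReg K V z) :=
  LinearMap.congr_fun (dReg_comp_find f) z

lemma find_comp (g : W → X) (f : V → W) :
    (find K g).comp (find K f) = find K (g ∘ f) := by
  ext p : 2
  simp only [LinearMap.comp_apply, lsingle_apply, find_single, one_smul, find_regSingle,
    List.map_map]

lemma regSingle_mem_Asub {P : Set (List V)} {n : ℕ} {l : List V} (hP : Reg l → l ∈ P)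
    (hl : l.length = n + 1) : regSingle K l ∈ Asub K P n := by
  unfold regSingle
  split_ifs with h
  · exact single_mem_supported K 1 ⟨hP h, hl, h⟩
  · exact zero_mem _

lemma isChain_map_of_isDigraphMap {G : Digraph' V} {H : Digraph' W} {f : V → W}
    (hf : IsDigraphMap G H f) {l : List V} (hl : l.IsChain G.edge) (hreg : Reg (l.map f)) :
    (l.map f).IsChain H.edge := by
  rw [reg_iff] at hreg
  rw [List.isChain_iff_getElem] at hl ⊢
  intro i hi
  simp only [List.getElem_map] at hreg ⊢
  exact (hf _ _ (hl i (by simpa using hi))).resolve_left (hreg i hi)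

section DigraphMap

variable {G : Digraph' V} {H : Digraph' W} {f : V → W} {n : ℕ}

lemma find_mem_Asub (hf : IsDigraphMap G H f) {z : List V →₀ K}
    (hz : z ∈ Asub K (pathsOf G) n) :
    find K f z ∈ Asub K (pathsOf H) n := by
  refine supported_le_comap (M := Asub K (pathsOf H) n) (T := find K f) ?_ hz
  rintro l ⟨⟨hne, hch⟩, hlen, -⟩
  rw [find_single, one_smul]
  exact regSingle_mem_Asub (fun h => ⟨by simpa using hne, isChain_map_of_isDigraphMap hf hch h⟩)
    (by rw [List.length_map, hlen])

lemma find_mem_OmegaSub (hf : IsDigraphMap G H f) {z : List V →₀ K}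
    (hz : z ∈ OmegaSub K (pathsOf G) n) :
    find K f z ∈ OmegaSub K (pathsOf H) n :=
  ⟨find_mem_Asub hf hz.1, by
    rw [SetLike.mem_coe, Submodule.mem_comap, dReg_find]
    exact find_mem_Asub hf hz.2⟩

lemma find_mem_Zsub (hf : IsDigraphMap G H f) {z : List V →₀ K}
    (hz : z ∈ Zsub K (pathsOf G) n) :
    find K f z ∈ Zsub K (pathsOf H) n :=
  ⟨find_mem_OmegaSub hf hz.1, by
    rw [SetLike.mem_coe, LinearMap.mem_ker, dReg_find, LinearMap.mem_ker.mp hz.2, map_zero]⟩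

lemma find_mem_Bsub (hf : IsDigraphMap G H f) {z : List V →₀ K}
    (hz : z ∈ Bsub K (pathsOf G) n) :
    find K f z ∈ Bsub K (pathsOf H) n := by
  obtain ⟨w, hw, rfl⟩ := hz
  exact ⟨find K f w, find_mem_OmegaSub hf hw, dReg_find f w⟩

end DigraphMap

lemma find_id_of_mem_Asub {P : Set (List V)} {n : ℕ} {z : List V →₀ K}
    (hz : z ∈ Asub K P n) : find K id z = z := by
  rw [Asub, supported_eq_span_single] at hz
  refine LinearMap.eqOn_span' (g := LinearMap.id) ?_ hz
  rintro _ ⟨l, ⟨-, -, hl⟩, rfl⟩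
  simp [find_single, regSingle, hl]

/-- The cylinder `G □ I`; `(x, false)` and `(x, true)` are the bottom and top copies of `x`. -/
def cylinder (G : Digraph' V) : Digraph' (V × Bool) where
  edge a b := (a.2 = b.2 ∧ G.edge a.1 b.1) ∨ (a.1 = b.1 ∧ a.2 = false ∧ b.2 = true)
  loopless v h := by
    rcases h with ⟨-, h⟩ | ⟨-, h₁, h₂⟩
    · exact G.loopless _ h
    · simp [h₁] at h₂

/-- `(i₀,0)…(iₖ,0)(iₖ,1)…(iₙ,1)` for `p = i₀…iₙ`. -/
def prismPath (k : ℕ) (p : List V) : List (V × Bool) :=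
  (p.take (k + 1)).map (·, false) ++ (p.drop k).map (·, true)

/-- `(i₀,0)…(iₖ₋₁,0)(iₖ,1)…(iₙ,1)` for `p = i₀…iₙ`. -/
def stairPath (k : ℕ) (p : List V) : List (V × Bool) :=
  (p.take k).map (·, false) ++ (p.drop k).map (·, true)

lemma length_prismPath {k : ℕ} {p : List V} (hk : k < p.length) :
    (prismPath k p).length = p.length + 1 := by
  simp only [prismPath, List.length_append, List.length_map, List.length_take, List.length_drop]
  omega

lemma stairPath_zero (p : List V) : stairPath 0 p = p.map (·, true) := by
  simp [stairPath]

lemma stairPath_length (p : List V) : stairPath p.length p = p.map (·, false) := by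
  simp [stairPath]

lemma prismPath_eraseIdx_self {k : ℕ} {p : List V} (hk : k < p.length) :
    (prismPath k p).eraseIdx k = stairPath k p := by
  simp only [prismPath, stairPath]
  exact List.ext_getElem (by grind) (by grind)

lemma prismPath_eraseIdx_succ_self {k : ℕ} {p : List V} (hk : k < p.length) :
    (prismPath k p).eraseIdx (k + 1) = stairPath (k + 1) p := by
  simp only [prismPath, stairPath]
  exact List.ext_getElem (by grind) (by grind)

lemma prismPath_succ_eraseIdx_of_le {m q : ℕ} {p : List V} (hm : m + 1 < p.length)
    (hq : q ≤ m) : (prismPath (m + 1) p).eraseIdx q = prismPath m (p.eraseIdx q) := by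
  simp only [prismPath]
  exact List.ext_getElem (by grind) (by grind)

lemma prismPath_eraseIdx_succ_of_lt {k r : ℕ} {p : List V} (hk : k < r) (hr : r < p.length) :
    (prismPath k p).eraseIdx (r + 1) = prismPath k (p.eraseIdx r) := by
  simp only [prismPath]
  exact List.ext_getElem (by grind) (by grind)

lemma getElem_prismPath_of_le {k j : ℕ} {p : List V} (hk : k < p.length) (hj : j ≤ k) :
    (prismPath k p)[j]'(by rw [length_prismPath hk]; omega) = (p[j], false) := by
  simp only [prismPath]
  grind

lemma getElem_prismPath_succ_of_le {k j : ℕ} {p : List V} (hk : k < p.length) (hj : k ≤ j)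
    (hjp : j < p.length) :
    (prismPath k p)[j + 1]'(by rw [length_prismPath hk]; omega) = (p[j], true) := by
  simp only [prismPath]
  grind

lemma reg_prismPath_iff {k : ℕ} {p : List V} (hk : k < p.length) :
    Reg (prismPath k p) ↔ Reg p := by
  simp only [reg_iff, length_prismPath hk]
  constructor
  · intro h i hi
    rcases Nat.lt_or_ge i k with hik | hik
    · have := h i (by omega)
      rw [getElem_prismPath_of_le hk hik.le, getElem_prismPath_of_le hk hik] at this
      simpa using this
    · have := h (i + 1) (by omega)
      rw [getElem_prismPath_succ_of_le hk hik (by omega),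
        getElem_prismPath_succ_of_le hk (by omega) hi] at this
      simpa using this
  · intro h j hj
    rcases Nat.lt_or_ge j k with hjk | hjk
    · rw [getElem_prismPath_of_le hk hjk.le, getElem_prismPath_of_le hk hjk]
      simpa using h j (by omega)
    rcases hjk.eq_or_lt with rfl | hjk
    · rw [getElem_prismPath_of_le hk le_rfl, getElem_prismPath_succ_of_le hk le_rfl hk]
      simp
    · obtain ⟨i, rfl⟩ := Nat.exists_eq_add_of_lt hjk
      rw [getElem_prismPath_succ_of_le hk (by omega) (by omega),
        getElem_prismPath_succ_of_le hk (by omega) (by omega)]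
      simpa using h _ (by omega)

lemma isChain_prismPath {G : Digraph' V} {k : ℕ} {p : List V} (hk : k < p.length)
    (hp : p.IsChain G.edge) : (prismPath k p).IsChain (cylinder G).edge := by
  rw [List.isChain_iff_getElem] at hp ⊢
  intro j hj
  rw [length_prismPath hk] at hj
  rcases Nat.lt_or_ge j k with hjk | hjk
  · rw [getElem_prismPath_of_le hk hjk.le, getElem_prismPath_of_le hk hjk]
    exact Or.inl ⟨rfl, hp j (by omega)⟩
  rcases hjk.eq_or_lt with rfl | hjk
  · rw [getElem_prismPath_of_le hk le_rfl, getElem_prismPath_succ_of_le hk le_rfl hk]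
    exact Or.inr ⟨rfl, rfl, rfl⟩
  · obtain ⟨i, rfl⟩ := Nat.exists_eq_add_of_lt hjk
    rw [getElem_prismPath_succ_of_le hk (by omega) (by omega),
      getElem_prismPath_succ_of_le hk (by omega) (by omega)]
    exact Or.inl ⟨rfl, hp _ (by omega)⟩

noncomputable def prismChain (K : Type) [Field K] {V : Type} (p : List V) :
    List (V × Bool) →₀ K :=
  ∑ k ∈ Finset.range p.length, (-1 : K) ^ k • regSingle K (prismPath k p)

noncomputable def prism (K : Type) [Field K] (V : Type) :
    (List V →₀ K) →ₗ[K] (List (V × Bool) →₀ K) :=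
  lsum K fun p => LinearMap.toSpanSingleton K _ (prismChain K p)

lemma prism_single (p : List V) (c : K) : prism K V (single p c) = c • prismChain K p := by
  rw [prism, lsum_single, LinearMap.toSpanSingleton_apply]

lemma prism_regSingle (l : List V) : prism K V (regSingle K l) = prismChain K l := by
  by_cases h : Reg l
  · rw [regSingle, if_pos h, prism_single, one_smul]
  · rw [regSingle, if_neg h, map_zero, prismChain]
    refine (Finset.sum_eq_zero fun k hk => ?_).symm
    rw [regSingle, if_neg (mt (reg_prismPath_iff (Finset.mem_range.mp hk)).mp h), smul_zero]

/-- The term of `∂ P e_p` deleting vertex `q` of the `k`-th prism path. -/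
noncomputable def boundaryPrismTerm (K : Type) [Field K] {V : Type} (p : List V) (k q : ℕ) :
    List (V × Bool) →₀ K :=
  (-1 : K) ^ (k + q) • regSingle K ((prismPath k p).eraseIdx q)

/-- The term of `P ∂ e_p` from the `m`-th prism path over the deletion of vertex `r`. -/
noncomputable def prismBoundaryTerm (K : Type) [Field K] {V : Type} (p : List V) (m r : ℕ) :
    List (V × Bool) →₀ K :=
  (-1 : K) ^ (m + r) • regSingle K (prismPath m (p.eraseIdx r))

lemma dReg_prismChain (p : List V) :
    dReg K _ (prismChain K p) = ∑ k ∈ Finset.range p.length,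
      ∑ q ∈ Finset.range (p.length + 1), boundaryPrismTerm K p k q := by
  rw [prismChain, map_sum]
  refine Finset.sum_congr rfl fun k hk => ?_
  have hk := Finset.mem_range.mp hk
  rw [map_smul, dReg_regSingle, pathBoundary, length_prismPath hk, if_pos (by omega),
    Finset.smul_sum]
  simp only [boundaryPrismTerm, smul_smul, pow_add]

lemma prism_pathBoundary (p : List V) :
    prism K V (pathBoundary K p) = ∑ r ∈ Finset.range p.length,
      ∑ m ∈ Finset.range (p.length - 1), prismBoundaryTerm K p m r := by
  rw [pathBoundary]
  split_ifs with h
  · rw [map_sum]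
    refine Finset.sum_congr rfl fun r hr => ?_
    rw [map_smul, prism_regSingle, prismChain, List.length_eraseIdx_of_lt (Finset.mem_range.mp hr),
      Finset.smul_sum]
    simp only [prismBoundaryTerm, smul_smul, pow_add, mul_comm]
  · rw [map_zero, show p.length - 1 = 0 by omega]
    simp

lemma boundaryPrismTerm_self {p : List V} {k : ℕ} (hk : k < p.length) :
    boundaryPrismTerm K p k k = regSingle K (stairPath k p) := by
  rw [boundaryPrismTerm, prismPath_eraseIdx_self hk, ← two_mul, pow_mul]
  simp

lemma boundaryPrismTerm_succ_self {p : List V} {k : ℕ} (hk : k < p.length) :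
    boundaryPrismTerm K p k (k + 1) = -regSingle K (stairPath (k + 1) p) := by
  rw [boundaryPrismTerm, prismPath_eraseIdx_succ_self hk, ← add_assoc, ← two_mul, pow_succ,
    pow_mul]
  simp

lemma boundaryPrismTerm_of_lt {p : List V} {k q : ℕ} (hk : k < p.length) (hq : q < k) :
    boundaryPrismTerm K p k q = -prismBoundaryTerm K p (k - 1) q := by
  obtain ⟨m, rfl⟩ : ∃ m, k = m + 1 := ⟨k - 1, by omega⟩
  rw [boundaryPrismTerm, prismBoundaryTerm, prismPath_succ_eraseIdx_of_le hk (by omega),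
    Nat.add_sub_cancel, add_right_comm, pow_succ, mul_neg_one, neg_smul]

lemma boundaryPrismTerm_succ_of_lt {p : List V} {k r : ℕ} (hk : k < r) (hr : r < p.length) :
    boundaryPrismTerm K p k (r + 1) = -prismBoundaryTerm K p k r := by
  rw [boundaryPrismTerm, prismBoundaryTerm, prismPath_eraseIdx_succ_of_lt hk hr, ← add_assoc,
    pow_succ, mul_neg_one, neg_smul]

lemma sum_boundaryPrismTerm_offDiag (p : List V) :
    ∑ x ∈ (Finset.range p.length).sigma (fun k => Finset.range (p.length + 1) \ {k, k + 1}),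
      boundaryPrismTerm K p x.1 x.2 =
    ∑ x ∈ (Finset.range p.length).sigma (fun _ => Finset.range (p.length - 1)),
      -prismBoundaryTerm K p x.2 x.1 := by
  refine Finset.sum_nbij'
    (fun x => if x.2 < x.1 then ⟨x.2, x.1 - 1⟩ else ⟨x.2 - 1, x.1⟩)
    (fun x => if x.1 ≤ x.2 then ⟨x.2 + 1, x.1⟩ else ⟨x.2, x.1 + 1⟩) ?_ ?_ ?_ ?_ ?_
  all_goals
    rintro ⟨a, b⟩ hx
    simp only [Finset.mem_sigma, Finset.mem_sdiff, Finset.mem_range, Finset.mem_insert,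
      Finset.mem_singleton, not_or] at hx
  · dsimp only
    split_ifs <;> simp only [Finset.mem_sigma, Finset.mem_range] <;> omega
  · dsimp only
    split_ifs <;> simp only [Finset.mem_sigma, Finset.mem_sdiff, Finset.mem_range,
      Finset.mem_insert, Finset.mem_singleton, not_or] <;> omega
  · by_cases h : b < a
    · simp only [if_pos h, if_pos (show b ≤ a - 1 by omega)]
      exact Sigma.ext (by dsimp only; omega) (heq_of_eq rfl)
    · simp only [if_neg h, if_neg (show ¬ b - 1 ≤ a by omega)]
      exact Sigma.ext rfl (heq_of_eq (by dsimp only; omega))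
  · by_cases h : a ≤ b
    · simp only [if_pos h, if_pos (show a < b + 1 by omega)]
      exact Sigma.ext rfl (heq_of_eq (by dsimp only; omega))
    · simp only [if_neg h, if_neg (show ¬ a + 1 < b by omega)]
      exact Sigma.ext (by dsimp only; omega) (heq_of_eq rfl)
  · by_cases h : b < a
    · simp only [if_pos h]
      exact boundaryPrismTerm_of_lt hx.1 h
    · obtain ⟨r, rfl⟩ : ∃ r, b = r + 1 := ⟨b - 1, by omega⟩
      simp only [if_neg h, Nat.add_sub_cancel]
      exact boundaryPrismTerm_succ_of_lt (by omega) (by omega)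

lemma dReg_prismChain_eq (p : List V) :
    dReg K _ (prismChain K p) = regSingle K (p.map (·, true)) - regSingle K (p.map (·, false))
      - prism K V (pathBoundary K p) := by
  have hdiag : ∀ k ∈ Finset.range p.length,
      ∑ q ∈ Finset.range (p.length + 1), boundaryPrismTerm K p k q =
        ∑ q ∈ Finset.range (p.length + 1) \ {k, k + 1}, boundaryPrismTerm K p k q
          + (regSingle K (stairPath k p) - regSingle K (stairPath (k + 1) p)) := by
    intro k hk
    have hk := Finset.mem_range.mp hk
    have hsub : ({k, k + 1} : Finset ℕ) ⊆ Finset.range (p.length + 1) := by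
      intro x hx
      simp only [Finset.mem_insert, Finset.mem_singleton] at hx
      simp only [Finset.mem_range]
      omega
    rw [← Finset.sum_sdiff hsub, Finset.sum_pair (by omega), boundaryPrismTerm_self hk,
      boundaryPrismTerm_succ_self hk, sub_eq_add_neg]
  rw [dReg_prismChain, Finset.sum_congr rfl hdiag, Finset.sum_add_distrib, Finset.sum_range_sub',
    Finset.sum_sigma', sum_boundaryPrismTerm_offDiag, prism_pathBoundary, stairPath_zero,
    stairPath_length, ← Finset.sum_sigma' _ (fun _ => _) (fun r m => -prismBoundaryTerm K p m r)]
  simp only [Finset.sum_neg_distrib]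
  abel

lemma dReg_comp_prism :
    (dReg K (V × Bool)).comp (prism K V) =
      find K (·, true) - find K (·, false) - (prism K V).comp (dReg K V) := by
  ext p : 2
  simp only [LinearMap.comp_apply, LinearMap.sub_apply, lsingle_apply, prism_single,
    find_single, dReg_single, one_smul, dReg_prismChain_eq]

lemma dReg_prism (z : List V →₀ K) :
    dReg K _ (prism K V z) = find K (·, true) z - find K (·, false) z - prism K V (dReg K V z) :=
  LinearMap.congr_fun dReg_comp_prism z

lemma prism_mem_Asub {G : Digraph' V} {n : ℕ} {z : List V →₀ K}
    (hz : z ∈ Asub K (pathsOf G) n) : prism K V z ∈ Asub K (pathsOf (cylinder G)) (n + 1) := by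
  refine supported_le_comap (M := Asub K (pathsOf (cylinder G)) (n + 1)) (T := prism K V) ?_ hz
  rintro l ⟨⟨-, hch⟩, hlen, -⟩
  rw [prism_single, one_smul, prismChain]
  refine Submodule.sum_mem _ fun k hk => Submodule.smul_mem _ _ ?_
  have hk := Finset.mem_range.mp hk
  refine regSingle_mem_Asub (fun _ => ⟨?_, isChain_prismPath hk hch⟩) ?_
  · rw [← List.length_pos_iff, length_prismPath hk]
    omega
  · rw [length_prismPath hk, hlen]

lemma isDigraphMap_cylinder_layer (G : Digraph' V) (b : Bool) :
    IsDigraphMap G (cylinder G) (·, b) :=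
  fun _ _ h => Or.inr (Or.inl ⟨rfl, h⟩)

lemma prism_mem_OmegaSub_of_mem_Zsub {G : Digraph' V} {n : ℕ} {z : List V →₀ K}
    (hz : z ∈ Zsub K (pathsOf G) n) :
    prism K V z ∈ OmegaSub K (pathsOf (cylinder G)) (n + 1) := by
  have hA : z ∈ Asub K (pathsOf G) n := hz.1.1
  refine ⟨prism_mem_Asub hA, ?_⟩
  rw [SetLike.mem_coe, Submodule.mem_comap, dReg_prism, LinearMap.mem_ker.mp hz.2, map_zero,
    sub_zero, Nat.add_sub_cancel]
  exact sub_mem (find_mem_Asub (isDigraphMap_cylinder_layer G true) hA)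
    (find_mem_Asub (isDigraphMap_cylinder_layer G false) hA)

def cylinderMap (f g : V → W) (v : V × Bool) : W :=
  if v.2 then g v.1 else f v.1

lemma isDigraphMap_cylinderMap {G : Digraph' V} {H : Digraph' W} {f g : V → W}
    (hf : IsDigraphMap G H f) (hg : IsDigraphMap G H g)
    (hfg : ∀ x, f x = g x ∨ H.edge (f x) (g x)) :
    IsDigraphMap (cylinder G) H (cylinderMap f g) := by
  rintro ⟨x, a⟩ ⟨y, b⟩ (⟨rfl, h⟩ | ⟨rfl, rfl, rfl⟩)
  · cases a
    · exact hf x y h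
    · exact hg x y h
  · exact hfg x

lemma find_cylinderMap_comp (f g : V → W) (b : Bool) :
    (find K (cylinderMap f g)).comp (find K (·, b)) = find K (if b then g else f) := by
  rw [find_comp]
  cases b <;> rfl

lemma sub_mem_Bsub_of_step {G : Digraph' V} {H : Digraph' W} {f g : V → W}
    (hf : IsDigraphMap G H f) (hg : IsDigraphMap G H g)
    (hfg : ∀ x, f x = g x ∨ H.edge (f x) (g x)) {n : ℕ} {z : List V →₀ K}
    (hz : z ∈ Zsub K (pathsOf G) n) :
    find K g z - find K f z ∈ Bsub K (pathsOf H) n := by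
  refine ⟨find K (cylinderMap f g) (prism K V z),
    find_mem_OmegaSub (isDigraphMap_cylinderMap hf hg hfg) (prism_mem_OmegaSub_of_mem_Zsub hz),
    ?_⟩
  rw [dReg_find, dReg_prism, LinearMap.mem_ker.mp hz.2, map_zero, sub_zero, map_sub,
    ← LinearMap.comp_apply, ← LinearMap.comp_apply, find_cylinderMap_comp,
    find_cylinderMap_comp]
  rfl

lemma sub_mem_Bsub_of_dHomotopic {G : Digraph' V} {H : Digraph' W} {f g : V → W}
    (hfg : DHomotopic G H f g) {n : ℕ} {z : List V →₀ K} (hz : z ∈ Zsub K (pathsOf G) n) :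
    find K f z - find K g z ∈ Bsub K (pathsOf H) n := by
  induction hfg with
  | refl => simp
  | tail _ hstep ih =>
    obtain ⟨hb, hc, hbc | hcb⟩ := hstep
    · simpa using sub_mem ih (sub_mem_Bsub_of_step hb hc hbc hz)
    · simpa using add_mem ih (sub_mem_Bsub_of_step hc hb hcb hz)

lemma comp_sub_mem_Bsub_of_dHomotopic_id {G : Digraph' V} {f : V → W} {g : W → V}
    (hgf : DHomotopic G G (g ∘ f) id) {n : ℕ} {z : List V →₀ K}
    (hz : z ∈ Zsub K (pathsOf G) n) :
    find K g (find K f z) - z ∈ Bsub K (pathsOf G) n := by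
  have h := sub_mem_Bsub_of_dHomotopic hgf hz
  rwa [find_id_of_mem_Asub hz.1.1, ← find_comp, LinearMap.comp_apply] at h

end PH

theorem statement7_general (K : Type) [Field K] (V W : Type)
    (G : PH.Digraph' V) (H : PH.Digraph' W) :
    -- homotopic digraph maps induce the same map on path homology
    (∀ f g : V → W, PH.IsDigraphMap G H f → PH.IsDigraphMap G H g →
      PH.DHomotopic G H f g →
      ∀ (n : ℕ) (z : List V →₀ K), z ∈ PH.Zsub K (PH.pathsOf G) n →
        PH.find K f z ∈ PH.Zsub K (PH.pathsOf H) n ∧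
        PH.find K g z ∈ PH.Zsub K (PH.pathsOf H) n ∧
        PH.find K f z - PH.find K g z ∈ PH.Bsub K (PH.pathsOf H) n) ∧
    -- a homotopy equivalence realized by f, g gives mutually inverse isomorphisms
    (∀ (f : V → W) (g : W → V), PH.IsDigraphMap G H f → PH.IsDigraphMap H G g →
      PH.DHomotopic G G (g ∘ f) id → PH.DHomotopic H H (f ∘ g) id →
      (∀ n : ℕ, Nonempty ((PH.Hsm K (PH.pathsOf G) n) ≃ₗ[K] (PH.Hsm K (PH.pathsOf H) n))) ∧
      (∀ (n : ℕ) (z : List V →₀ K), z ∈ PH.Zsub K (PH.pathsOf G) n →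
        PH.find K g (PH.find K f z) - z ∈ PH.Bsub K (PH.pathsOf G) n) ∧
      (∀ (n : ℕ) (z : List W →₀ K), z ∈ PH.Zsub K (PH.pathsOf H) n →
        PH.find K f (PH.find K g z) - z ∈ PH.Bsub K (PH.pathsOf H) n)) := by
  refine ⟨fun f g hf hg hfg n z hz =>
    ⟨PH.find_mem_Zsub hf hz, PH.find_mem_Zsub hg hz, PH.sub_mem_Bsub_of_dHomotopic hfg hz⟩, ?_⟩
  intro f g hf hg hgf hfg
  have hGF (n : ℕ) : ∀ z ∈ PH.Zsub K (PH.pathsOf G) n,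
      PH.find K g (PH.find K f z) - z ∈ PH.Bsub K (PH.pathsOf G) n :=
    fun _ => PH.comp_sub_mem_Bsub_of_dHomotopic_id hgf
  have hFG (n : ℕ) : ∀ z ∈ PH.Zsub K (PH.pathsOf H) n,
      PH.find K f (PH.find K g z) - z ∈ PH.Bsub K (PH.pathsOf H) n :=
    fun _ => PH.comp_sub_mem_Bsub_of_dHomotopic_id hfg
  refine ⟨fun n => ⟨Submodule.mapMkQEquivOfInverse (PH.find K f) (PH.find K g)
    (fun _ => PH.find_mem_Bsub hf) (fun _ => PH.find_mem_Bsub hg)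
    (fun _ => PH.find_mem_Zsub hf) (fun _ => PH.find_mem_Zsub hg) (hGF n) (hFG n)⟩, hGF, hFG⟩

theorem statement7 (K : Type) [Field K] (V W : Type) [Fintype V] [Fintype W]
    (G : PH.Digraph' V) (H : PH.Digraph' W) :
    -- homotopic digraph maps induce the same map on path homology
    (∀ f g : V → W, PH.IsDigraphMap G H f → PH.IsDigraphMap G H g →
      PH.DHomotopic G H f g →
      ∀ (n : ℕ) (z : List V →₀ K), z ∈ PH.Zsub K (PH.pathsOf G) n →
        PH.find K f z ∈ PH.Zsub K (PH.pathsOf H) n ∧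
        PH.find K g z ∈ PH.Zsub K (PH.pathsOf H) n ∧
        PH.find K f z - PH.find K g z ∈ PH.Bsub K (PH.pathsOf H) n) ∧
    -- a homotopy equivalence realized by f, g gives mutually inverse isomorphisms
    (∀ (f : V → W) (g : W → V), PH.IsDigraphMap G H f → PH.IsDigraphMap H G g →
      PH.DHomotopic G G (g ∘ f) id → PH.DHomotopic H H (f ∘ g) id →
      (∀ n : ℕ, Nonempty ((PH.Hsm K (PH.pathsOf G) n) ≃ₗ[K] (PH.Hsm K (PH.pathsOf H) n))) ∧
      (∀ (n : ℕ) (z : List V →₀ K), z ∈ PH.Zsub K (PH.pathsOf G) n →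
        PH.find K g (PH.find K f z) - z ∈ PH.Bsub K (PH.pathsOf G) n) ∧
      (∀ (n : ℕ) (z : List W →₀ K), z ∈ PH.Zsub K (PH.pathsOf H) n →
        PH.find K f (PH.find K g z) - z ∈ PH.Bsub K (PH.pathsOf H) n)) :=
  statement7_general K V W G H
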